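/- arXiv:1404.5983 — 4 statements merged into one kernel-verified Lean document; each statement's English description precedes it below -/
import Mathlib

section
/- For every natural number n, the root multiplicity of the polynomial QF_n = ∏_{m=1}^{n} P_m at X = Complex.I equals ⌊n/2⌋. (Equivalently: the quantum factorial [n]! = [1][2]⋯[n] vanishes at q = i to order exactly ⌊n/2⌋.) -/
open Polynomial Finset

/-- The polynomial form `P_n(X) = ∑_{k=0}^{n-1} X^{2k}` of the quantum integer `[n]`. -/
noncomputable def quantumP (n : ℕ) : Polynomial ℂ :=
  ∑ k ∈ Finset.range n, Polynomial.X ^ (2 * k)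

/-- The polynomial form `QF_n = ∏_{m=1}^n P_m` of the quantum factorial `[n]!`. -/
noncomputable def quantumQF (n : ℕ) : Polynomial ℂ :=
  ∏ m ∈ Finset.range n, quantumP (m + 1)

lemma quantumP_mul : ∀ n : ℕ, quantumP n * (Polynomial.X ^ 2 - 1) =
    Polynomial.X ^ (2 * n) - 1 := by
  intro n
  have := geom_sum_mul (Polynomial.X ^ 2 : Polynomial ℂ) n
  simpa [quantumP, pow_mul] using this

lemma quantumP_ne_zero (n : ℕ) (hn : n ≠ 0) : quantumP n ≠ 0 := by
  intro h
  have : Polynomial.eval 1 (quantumP n) = 0 := by rw [h]; simp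
  simp [quantumP, Polynomial.eval_finset_sum] at this
  exact hn (by exact_mod_cast this)

lemma rootMultiplicity_quantumP (n : ℕ) (hn : n ≠ 0) :
    Polynomial.rootMultiplicity Complex.I (quantumP n) = if 2 ∣ n then 1 else 0 := by
  by_cases h : 2 ∣ n
  · rw [if_pos h]
    have hne : quantumP n ≠ 0 := quantumP_ne_zero n hn
    have hX2 : (Polynomial.X ^ 2 - 1 : Polynomial ℂ) ≠ 0 := by
      intro h0
      have : Polynomial.eval 0 (Polynomial.X ^ 2 - 1 : Polynomial ℂ) = 0 := by rw [h0]; simp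
      simp at this
    have hmul := Polynomial.rootMultiplicity_mul (x := Complex.I) (mul_ne_zero hne hX2)
    rw [quantumP_mul n] at hmul
    have hX2root : Polynomial.rootMultiplicity Complex.I (Polynomial.X ^ 2 - 1 : Polynomial ℂ) = 0 := by
      apply Polynomial.rootMultiplicity_eq_zero
      simp [Polynomial.IsRoot, Complex.I_sq]
      norm_num
    -- separable
    have hsep : (Polynomial.X ^ (2 * n) - Polynomial.C 1 : Polynomial ℂ).Separable := by
      apply Polynomial.separable_X_pow_sub_C
      · exact_mod_cast (by positivity : (0:ℝ) < (2 * n : ℕ)).ne'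
      · exact one_ne_zero
    have hle : Polynomial.rootMultiplicity Complex.I (Polynomial.X ^ (2 * n) - 1 : Polynomial ℂ) ≤ 1 := by
      have := Polynomial.rootMultiplicity_le_one_of_separable hsep Complex.I
      simpa using this
    have hroot : Polynomial.IsRoot (Polynomial.X ^ (2 * n) - 1 : Polynomial ℂ) Complex.I := by
      obtain ⟨k, rfl⟩ := h
      simp [Polynomial.IsRoot, pow_mul, Complex.I_sq, show 2 * (2 * k) = 4 * k by ring,
        pow_mul, Complex.I_pow_four]
    have hne2 : (Polynomial.X ^ (2 * n) - 1 : Polynomial ℂ) ≠ 0 := by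
      rw [← quantumP_mul n]; exact mul_ne_zero hne hX2
    have hge : 1 ≤ Polynomial.rootMultiplicity Complex.I (Polynomial.X ^ (2 * n) - 1 : Polynomial ℂ) :=
      (Polynomial.rootMultiplicity_pos hne2).2 hroot
    omega
  · rw [if_neg h]
    apply Polynomial.rootMultiplicity_eq_zero
    obtain ⟨k, rfl⟩ : ∃ k, n = 2 * k + 1 := ⟨n / 2, by omega⟩
    simp [Polynomial.IsRoot, quantumP, Polynomial.eval_finset_sum, pow_mul, Complex.I_sq,
      Finset.sum_range_succ]

/-- The quantum factorial `[n]!` vanishes at `q = i` to order exactly `⌊n/2⌋`. -/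
theorem rootMultiplicity_quantumQF_I (n : ℕ) :
    Polynomial.rootMultiplicity Complex.I (quantumQF n) = n / 2 := by
  induction n with
  | zero => simp [quantumQF, Polynomial.rootMultiplicity_eq_zero]
  | succ n ih =>
    have hQF : quantumQF (n + 1) = quantumQF n * quantumP (n + 1) := by
      rw [quantumQF, Finset.prod_range_succ, ← quantumQF]
    have hQFne : quantumQF n ≠ 0 := by
      apply Finset.prod_ne_zero_iff.2
      intro m _
      exact quantumP_ne_zero _ (Nat.succ_ne_zero m)
    rw [hQF, Polynomial.rootMultiplicity_mul
      (mul_ne_zero hQFne (quantumP_ne_zero _ (Nat.succ_ne_zero n))), ih,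
      rootMultiplicity_quantumP _ (Nat.succ_ne_zero n)]
    rcases Nat.even_or_odd n with ⟨k, rfl⟩ | ⟨k, rfl⟩
    · rw [if_neg (by omega)]; omega
    · rw [if_pos (by omega)]; omega
end

section
/- Let x_1, …, x_n and y_1, …, y_m be odd positive integers such that ∑_{i=1}^{n}(x_i − 1) ≡ ∑_{j=1}^{m}(y_j − 1) (mod 4). Set A = ∑_{i}(x_i − 1) and B = ∑_{j}(y_j − 1). Then (X − Complex.I)^2 divides the polynomial X^B · ∏_{i=1}^{n} P_{x_i} − X^A · ∏_{j=1}^{m} P_{y_j} in ℂ[X]. (Equivalently: the difference of quantum-integer products ∏_i [x_i] − ∏_j [y_j], as a Laurent polynomial in q, vanishes at q = i to order at least 2.) -/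
open Polynomial Finset

/-- `P_n(i) = 1` for odd `n`. -/
lemma quantumP_eval_I (n : ℕ) (h : Odd n) : (quantumP n).eval Complex.I = 1 := by
  simp [quantumP, eval_finset_sum, pow_mul, Complex.I_sq, neg_one_geom_sum,
    Nat.not_even_iff_odd.2 h]

/-- `P_n'(i) = -i (n-1)` for odd `n`. -/
lemma quantumP_derivative_eval_I (n : ℕ) (h : Odd n) :
    (derivative (quantumP n)).eval Complex.I = -Complex.I * (n - 1 : ℕ) := by
  obtain ⟨t, rfl⟩ := h
  induction t with
  | zero => simp [quantumP]
  | succ t ih =>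
    have h1 : 2 * (t + 1) + 1 = (2 * t + 1) + 1 + 1 := by ring
    rw [h1]
    rw [show quantumP ((2*t+1)+1+1) = quantumP (2*t+1) + X ^ (2*(2*t+1)) + X^(2*(2*t+1+1)) by
      unfold quantumP; rw [Finset.sum_range_succ, Finset.sum_range_succ]]
    simp only [derivative_add, eval_add, ih, derivative_X_pow, eval_mul, eval_natCast,
      eval_pow, eval_X]
    have e1 : 2*(2*t+1) - 1 = 4*t+1 := by omega
    have e2 : 2*(2*t+1+1) - 1 = 4*t+3 := by omega
    rw [e1, e2]
    have i4 : (Complex.I)^(4*t) = 1 := by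
      rw [pow_mul, Complex.I_pow_four, one_pow]
    rw [pow_add, pow_add, i4, one_mul, one_mul]
    have i3 : (Complex.I)^(3:ℕ) = -Complex.I := by
      rw [pow_succ, Complex.I_sq]; ring
    rw [i3, pow_one]
    push_cast [show 2*t+1-1 = 2*t by omega, show 2*(t+1)+1-1 = 2*t+2 by omega]
    simp only [eval_C]
    ring

lemma I_pow_mod (k : ℕ) : Complex.I ^ k = Complex.I ^ (k % 4) := by
  conv_lhs => rw [← Nat.div_add_mod k 4]
  rw [pow_add, pow_mul, Complex.I_pow_four, one_pow, one_mul]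

lemma cast_mul_I_pow (k : ℕ) :
    (k : ℂ) * Complex.I ^ (k - 1) = -Complex.I * k * Complex.I ^ k := by
  cases k with
  | zero => simp
  | succ k =>
    rw [Nat.add_sub_cancel, pow_succ]
    push_cast
    linear_combination (((k:ℂ)+1) * Complex.I ^ k) * Complex.I_mul_I

lemma derivative_finset_prod {ι : Type*} [DecidableEq ι] (s : Finset ι) (f : ι → Polynomial ℂ) :
    derivative (∏ i ∈ s, f i) = ∑ i ∈ s, (∏ j ∈ s.erase i, f j) * derivative (f i) := by
  induction s using Finset.induction_on with
  | empty => simp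
  | @insert a s ha ih =>
    rw [Finset.prod_insert ha, derivative_mul, ih, Finset.sum_insert ha,
      Finset.erase_insert ha, Finset.mul_sum]
    have : ∀ i ∈ s, (∏ j ∈ (insert a s).erase i, f j) * derivative (f i)
        = f a * ((∏ j ∈ s.erase i, f j) * derivative (f i)) := by
      intro i hi
      have hne : a ≠ i := fun h => ha (h ▸ hi)
      rw [Finset.erase_insert_of_ne hne,
        Finset.prod_insert (fun h => ha (Finset.mem_of_mem_erase h)), mul_assoc]
    rw [Finset.sum_congr rfl this]
    ring

/-- If `x_1, …, x_n, y_1, …, y_m` are odd positive integers with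
`∑ (x_i − 1) ≡ ∑ (y_j − 1) (mod 4)`, then the difference of quantum-integer products
`∏ [x_i] − ∏ [y_j]` vanishes at `q = i` to order at least `2`: in polynomial form,
`(X − i)^2` divides `X^B ∏ P_{x_i} − X^A ∏ P_{y_j}` where `A = ∑ (x_i − 1)`,
`B = ∑ (y_j − 1)`. -/
theorem sub_prod_quantum_int_order_two (n m : ℕ) (x : Fin n → ℕ) (y : Fin m → ℕ)
    (hxodd : ∀ i, Odd (x i)) (hxpos : ∀ i, 0 < x i)
    (hyodd : ∀ j, Odd (y j)) (hypos : ∀ j, 0 < y j)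
    (hmod : (∑ i, (x i - 1)) ≡ (∑ j, (y j - 1)) [MOD 4]) :
    ((Polynomial.X : Polynomial ℂ) - Polynomial.C Complex.I) ^ 2 ∣
      (Polynomial.X : Polynomial ℂ) ^ (∑ j, (y j - 1)) * ∏ i, quantumP (x i) -
        (Polynomial.X : Polynomial ℂ) ^ (∑ i, (x i - 1)) * ∏ j, quantumP (y j) := by
  set A := ∑ i, (x i - 1) with hA
  set B := ∑ j, (y j - 1) with hB
  set Px : Polynomial ℂ := ∏ i, quantumP (x i) with hPxdef
  set Py : Polynomial ℂ := ∏ j, quantumP (y j) with hPydef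
  set F : Polynomial ℂ := X ^ B * Px - X ^ A * Py with hF
  have hIAB : Complex.I ^ A = Complex.I ^ B := by
    rw [I_pow_mod A, I_pow_mod B, hmod]
  have hPx : Px.eval Complex.I = 1 := by
    rw [hPxdef, eval_prod]
    exact Finset.prod_eq_one fun i _ => quantumP_eval_I _ (hxodd i)
  have hPy : Py.eval Complex.I = 1 := by
    rw [hPydef, eval_prod]
    exact Finset.prod_eq_one fun j _ => quantumP_eval_I _ (hyodd j)
  have hPx' : (derivative Px).eval Complex.I = -Complex.I * A := by
    rw [hPxdef, derivative_finset_prod, eval_finset_sum]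
    have : ∀ i ∈ (univ : Finset (Fin n)),
        eval Complex.I ((∏ j ∈ univ.erase i, quantumP (x j)) * derivative (quantumP (x i)))
          = -Complex.I * ((x i - 1 : ℕ) : ℂ) := by
      intro i _
      rw [eval_mul, eval_prod, quantumP_derivative_eval_I _ (hxodd i),
        Finset.prod_eq_one fun j _ => quantumP_eval_I _ (hxodd j), one_mul]
    rw [Finset.sum_congr rfl this, ← Finset.mul_sum, hA]
    push_cast
    ring
  have hPy' : (derivative Py).eval Complex.I = -Complex.I * B := by
    rw [hPydef, derivative_finset_prod, eval_finset_sum]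
    have : ∀ j ∈ (univ : Finset (Fin m)),
        eval Complex.I ((∏ k ∈ univ.erase j, quantumP (y k)) * derivative (quantumP (y j)))
          = -Complex.I * ((y j - 1 : ℕ) : ℂ) := by
      intro j _
      rw [eval_mul, eval_prod, quantumP_derivative_eval_I _ (hyodd j),
        Finset.prod_eq_one fun k _ => quantumP_eval_I _ (hyodd k), one_mul]
    rw [Finset.sum_congr rfl this, ← Finset.mul_sum, hB]
    push_cast
    ring
  have hFderiv : (derivative F).eval Complex.I = 0 := by
    rw [hF]
    simp only [derivative_sub, derivative_mul, derivative_X_pow, eval_sub, eval_add,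
      eval_mul, eval_pow, eval_X, eval_natCast, eval_C, hPx, hPy, hPx', hPy', mul_one]
    rw [cast_mul_I_pow A, cast_mul_I_pow B]
    rw [hIAB]
    ring
  obtain ⟨g, hg⟩ : (X - C Complex.I) ∣ F := by
    rw [dvd_iff_isRoot]
    simp only [IsRoot, hF, eval_sub, eval_mul, eval_pow, eval_X, hPx, hPy, hIAB]
    ring
  rw [hg, sq]
  refine mul_dvd_mul_left _ ?_
  rw [dvd_iff_isRoot]
  have hd := congrArg (fun p => (derivative p).eval Complex.I) hg
  simp only [derivative_mul, derivative_sub, derivative_X, derivative_C, sub_zero,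
    eval_add, eval_mul, eval_sub, eval_X, eval_C, eval_one, one_mul, sub_self,
    zero_mul, add_zero] at hd
  rw [hFderiv] at hd
  exact hd.symm
end

section
/- For every odd natural number n ≥ 1, the complex derivative at q = Complex.I of the function q ↦ q^{1−n} · P_n(q) (defined on ℂ ∖ {0}; this is the quantum integer [n] = (q^n − q^{−n})/(q − q^{−1}) as a function of q) equals 0. -/
/-!
The quantum integer `[n](q)` is invariant under `q ↦ q⁻¹` and, for odd `n`, under `q ↦ -q`
(all its exponents are then even). So it is invariant under `q ↦ -q⁻¹`, which fixes `i` and has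
derivative `-1` there; the chain rule gives `[n]'(i) = -[n]'(i)`.
-/

open Polynomial Finset

open Filter Topology

theorem deriv_eq_zero_of_eventuallyEq_comp_of_hasDerivAt_neg_one {𝕜 F : Type*}
    [NontriviallyNormedField 𝕜] [NormedAddCommGroup F] [NormedSpace 𝕜 F] [IsAddTorsionFree F]
    {f : 𝕜 → F} {g : 𝕜 → 𝕜} {x : 𝕜} (hfg : f =ᶠ[𝓝 x] f ∘ g) (hgx : g x = x)
    (hg : HasDerivAt g (-1) x) : deriv f x = 0 := by
  by_cases hf : DifferentiableAt 𝕜 f x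
  · have hcomp : HasDerivAt (f ∘ g) (-deriv f x) x := by
      rw [← hgx] at hf
      simpa [hgx] using hf.hasDerivAt.scomp x hg
    exact self_eq_neg.mp (hcomp.congr_of_eventuallyEq hfg).deriv
  · exact deriv_zero_of_not_differentiableAt hf

section QuantumInt

variable {K : Type*} [DivisionRing K]

def quantumInt (n : ℕ) (q : K) : K :=
  ∑ k ∈ range n, q ^ (2 * k + 1 - n : ℤ)

theorem quantumInt_inv (n : ℕ) (q : K) : quantumInt n q⁻¹ = quantumInt n q := by
  rw [quantumInt, quantumInt, ← sum_range_reflect]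
  refine sum_congr rfl fun k hk => ?_
  have hkn : k + 1 ≤ n := mem_range.mp hk
  rw [inv_zpow', Nat.cast_sub (by omega), Nat.cast_sub (by omega)]
  congr 1
  ring

theorem quantumInt_neg {n : ℕ} (hn : Odd n) (q : K) : quantumInt n (-q) = quantumInt n q := by
  refine sum_congr rfl fun k _ => Even.neg_zpow ?_ q
  obtain ⟨m, rfl⟩ := hn
  exact ⟨k - m, by push_cast; ring⟩

end QuantumInt

theorem zpow_one_sub_mul_eval_quantumP {q : ℂ} (hq : q ≠ 0) (n : ℕ) :
    q ^ (1 - (n : ℤ)) * (quantumP n).eval q = quantumInt n q := by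
  simp only [quantumP, eval_finsetSum, eval_pow, eval_X, mul_sum, quantumInt]
  refine sum_congr rfl fun k _ => ?_
  rw [← zpow_natCast, ← zpow_add₀ hq]
  congr 1
  push_cast
  ring

theorem deriv_quantum_int_odd_at_I_general (n : ℕ) (hodd : Odd n) :
    deriv (fun q : ℂ => q ^ (1 - (n : ℤ)) * (quantumP n).eval q) Complex.I = 0 := by
  have hlocal : (fun q : ℂ => q ^ (1 - (n : ℤ)) * (quantumP n).eval q) =ᶠ[𝓝 Complex.I]
      quantumInt n := by
    filter_upwards [isOpen_ne.mem_nhds Complex.I_ne_zero] with q hq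
    exact zpow_one_sub_mul_eval_quantumP hq n
  have hinvolution : HasDerivAt (fun q : ℂ => -q⁻¹) (-1) Complex.I := by
    simpa using (hasDerivAt_inv Complex.I_ne_zero).fun_neg
  rw [hlocal.deriv_eq]
  refine deriv_eq_zero_of_eventuallyEq_comp_of_hasDerivAt_neg_one
    (EventuallyEq.of_eq (funext fun q => ?_)) (by simp) hinvolution
  simp [quantumInt_neg hodd, quantumInt_inv]

/-- For odd `n ≥ 1`, the complex derivative at `q = i` of the quantum integer
`[n](q) = q^{1−n} · P_n(q)` vanishes. -/
theorem deriv_quantum_int_odd_at_I (n : ℕ) (hn : 1 ≤ n) (hodd : Odd n) :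
    deriv (fun q : ℂ => q ^ (1 - (n : ℤ)) * (quantumP n).eval q) Complex.I = 0 :=
  deriv_quantum_int_odd_at_I_general n hodd
end

section
/- Let Δ_1, Δ_2, Δ_3, Δ_4 be odd positive integers, let □_1, □_2, □_3 be even positive integers with Δ_1 + Δ_2 + Δ_3 + Δ_4 = □_1 + □_2 + □_3, and let k be a positive integer with Δ_j ≤ 2k − 1 for all j and 2k ≤ □_i for all i. Set A = ∑_{j=1}^{4} (2k − Δ_j − 1) and B = 2k + ∑_{i=1}^{3} (□_i − 2k). Then (X − Complex.I)^2 divides the polynomial X^B · ∏_{j=1}^{4} P_{2k−Δ_j} − X^A · P_{2k+1} · ∏_{i=1}^{3} P_{□_i−2k+1} in ℂ[X]. (Equivalently: the Laurent polynomial ∏_{j=1}^{4} [2k − Δ_j] − [2k+1] · ∏_{i=1}^{3} [□_i − 2k + 1] vanishes at q = i to order at least 2.) -/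
/-!
Two polynomials with the same value and derivative at `i` differ by a multiple of `(X - i) ^ 2`.
Under products values multiply and logarithmic derivatives add. At `i`, `X ^ a` has value `i ^ a`
and logarithmic derivative `-i a`, and for odd `n` the polynomial `P_n` has value `1` and
logarithmic derivative `-i (n - 1)`, because `P_{n+2} - P_n = X ^ (2n) (1 + X ^ 2)` and `1 + X ^ 2`
vanishes at `i` with derivative `2i`. Hence both terms have logarithmic derivative `-i (A + B)`,
and their values `i ^ B` and `i ^ A` coincide since `A ≡ B [MOD 4]`.
-/

open Polynomial Finset

section

variable {R : Type*} [CommRing R]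

/-- `c` plays the role of `p'(z) / p(z)`, stated without division. -/
def HasValueLogDeriv (p : R[X]) (z u c : R) : Prop :=
  p.eval z = u ∧ (derivative p).eval z = u * c

namespace HasValueLogDeriv

variable {p q : R[X]} {z u v c d : R}

theorem mul (hp : HasValueLogDeriv p z u c) (hq : HasValueLogDeriv q z v d) :
    HasValueLogDeriv (p * q) z (u * v) (c + d) := by
  refine ⟨by simp [hp.1, hq.1], ?_⟩
  simp only [derivative_mul, eval_add, eval_mul, hp.1, hp.2, hq.1, hq.2]
  ring

theorem pow (hp : HasValueLogDeriv p z u c) (n : ℕ) :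
    HasValueLogDeriv (p ^ n) z (u ^ n) (n * c) := by
  induction n with
  | zero => simp [HasValueLogDeriv]
  | succ n ih => simpa [pow_succ, add_mul] using ih.mul hp

theorem prod {ι : Type*} {s : Finset ι} {p : ι → R[X]} {u c : ι → R}
    (h : ∀ j ∈ s, HasValueLogDeriv (p j) z (u j) (c j)) :
    HasValueLogDeriv (∏ j ∈ s, p j) z (∏ j ∈ s, u j) (∑ j ∈ s, c j) := by
  classical
  induction s using Finset.induction_on with
  | empty => simp [HasValueLogDeriv]
  | insert a s ha ih =>
    rw [prod_insert ha, prod_insert ha, sum_insert ha]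
    exact (h a (mem_insert_self a s)).mul (ih fun j hj => h j (mem_insert_of_mem hj))

theorem sq_dvd_sub (hp : HasValueLogDeriv p z u c) (hq : HasValueLogDeriv q z u c) :
    (X - C z) ^ 2 ∣ p - q := by
  rcases eq_or_ne (p - q) 0 with h | h
  · simp [h]
  · refine (le_rootMultiplicity_iff h).1 ((one_lt_rootMultiplicity_iff_isRoot h).2 ⟨?_, ?_⟩)
    · simp [hp.1, hq.1]
    · simp [hp.2, hq.2]

end HasValueLogDeriv

end

open Complex

theorem hasValueLogDeriv_X_I : HasValueLogDeriv (X : ℂ[X]) I I (-I) := by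
  simp [HasValueLogDeriv]

theorem quantumP_add_two (n : ℕ) :
    quantumP (n + 2) = quantumP n + X ^ (2 * n) * (1 + X ^ 2) := by
  simp only [quantumP, sum_range_succ]
  ring

theorem hasValueLogDeriv_quantumP_I {n : ℕ} (hn : Odd n) :
    HasValueLogDeriv (quantumP n) I 1 (-I * (n - 1 : ℕ)) := by
  obtain ⟨m, rfl⟩ := hn
  induction m with
  | zero => simp [HasValueLogDeriv, quantumP]
  | succ m ih =>
    rw [show 2 * (m + 1) + 1 = 2 * m + 1 + 2 by ring, quantumP_add_two]
    have hstep : (derivative (X ^ (2 * (2 * m + 1)) * (1 + X ^ 2) : ℂ[X])).eval I = -2 * I := by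
      simp [pow_succ, pow_mul, ← two_mul]
    refine ⟨by simp [ih.1, pow_mul], ?_⟩
    rw [derivative_add, eval_add, ih.2, hstep]
    push_cast
    ring

theorem tet_cancellation_general (Δ : Fin 4 → ℕ) (Sq : Fin 3 → ℕ) (k : ℕ)
    (hΔodd : ∀ j, Odd (Δ j))
    (hSqeven : ∀ i, Even (Sq i))
    (hsum : ∑ j, Δ j = ∑ i, Sq i)
    (hΔk : ∀ j, Δ j ≤ 2 * k - 1) (hkSq : ∀ i, 2 * k ≤ Sq i) :
    ((Polynomial.X : Polynomial ℂ) - Polynomial.C Complex.I) ^ 2 ∣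
      (Polynomial.X : Polynomial ℂ) ^ (2 * k + ∑ i, (Sq i - 2 * k)) *
          ∏ j, quantumP (2 * k - Δ j) -
        (Polynomial.X : Polynomial ℂ) ^ (∑ j, (2 * k - Δ j - 1)) *
          (quantumP (2 * k + 1) * ∏ i, quantumP (Sq i - 2 * k + 1)) := by
  set A := ∑ j, (2 * k - Δ j - 1)
  set B := 2 * k + ∑ i, (Sq i - 2 * k)
  have hΔ (j : Fin 4) : Odd (2 * k - Δ j) :=
    Nat.Even.sub_odd ((hΔk j).trans (Nat.sub_le _ _)) (even_two_mul k) (hΔodd j)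
  have hSq (i : Fin 3) : Odd (Sq i - 2 * k + 1) :=
    ((hSqeven i).tsub (even_two_mul k)).add_one
  have hmod : A % 4 = B % 4 := by
    simp only [A, B, Fin.sum_univ_succ, Fin.sum_univ_zero, Fin.forall_fin_succ,
      IsEmpty.forall_iff, Nat.odd_iff, Nat.even_iff] at hΔodd hSqeven hΔk hkSq hsum ⊢
    omega
  have hlhs := (hasValueLogDeriv_X_I.pow B).mul
    (HasValueLogDeriv.prod (s := univ) fun j _ => hasValueLogDeriv_quantumP_I (hΔ j))
  have hrhs := (hasValueLogDeriv_X_I.pow A).mul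
    ((hasValueLogDeriv_quantumP_I (odd_two_mul_add_one k)).mul
      (HasValueLogDeriv.prod (s := univ) fun i _ => hasValueLogDeriv_quantumP_I (hSq i)))
  refine hlhs.sq_dvd_sub ?_
  convert hrhs using 1
  · simp [I_pow_eq_pow_mod, hmod]
  · simp only [A, B, Nat.add_sub_cancel, ← mul_sum]
    push_cast
    ring

/-- If `Δ_1, …, Δ_4` are odd positive, `□_1, □_2, □_3` are even positive with
`∑ Δ_j = ∑ □_i`, and `k` is a positive integer with `Δ_j ≤ 2k − 1` and `2k ≤ □_i`,
then the Laurent polynomial `∏_j [2k − Δ_j] − [2k+1] · ∏_i [□_i − 2k + 1]` vanishes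
at `q = i` to order at least `2`: in polynomial form `(X − i)^2` divides
`X^B ∏_j P_{2k−Δ_j} − X^A P_{2k+1} ∏_i P_{□_i−2k+1}` where
`A = ∑_j (2k − Δ_j − 1)` and `B = 2k + ∑_i (□_i − 2k)`. -/
theorem tet_cancellation (Δ : Fin 4 → ℕ) (Sq : Fin 3 → ℕ) (k : ℕ)
    (hΔodd : ∀ j, Odd (Δ j)) (hΔpos : ∀ j, 0 < Δ j)
    (hSqeven : ∀ i, Even (Sq i)) (hSqpos : ∀ i, 0 < Sq i)
    (hsum : ∑ j, Δ j = ∑ i, Sq i)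
    (hk : 0 < k) (hΔk : ∀ j, Δ j ≤ 2 * k - 1) (hkSq : ∀ i, 2 * k ≤ Sq i) :
    ((Polynomial.X : Polynomial ℂ) - Polynomial.C Complex.I) ^ 2 ∣
      (Polynomial.X : Polynomial ℂ) ^ (2 * k + ∑ i, (Sq i - 2 * k)) *
          ∏ j, quantumP (2 * k - Δ j) -
        (Polynomial.X : Polynomial ℂ) ^ (∑ j, (2 * k - Δ j - 1)) *
          (quantumP (2 * k + 1) * ∏ i, quantumP (Sq i - 2 * k + 1)) :=
  tet_cancellation_general Δ Sq k hΔodd hSqeven hsum hΔk hkSq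
end
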